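/- arXiv:2108.13284 — 3 statements merged into one kernel-verified Lean document; each statement's English description precedes it below -/
import Mathlib

section
/- For any integer n ≥ 4, define M_n = min over all sign choices b_k ∈ {1,-1} (k = 0,...,n/4-1) of |∑_{k=0}^{n/4-1} b_k sin((2k+1)π/n)|. Then M_{4n} ≤ M_n · 4 sin(π/(4n)) sin(π/(2n)). -/
open Real Finset

noncomputable def M (n : ℕ) : ℝ :=
  sInf {x : ℝ | ∃ b : ℕ → ℝ, (∀ k, b k = 1 ∨ b k = -1) ∧
    x = |∑ k ∈ Finset.range (n / 4), b k * Real.sin ((2 * (k : ℝ) + 1) * Real.pi / n)|}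

/-!
Each sign vector `b` for `n` lifts to one for `4n` by replacing `b k` with the block
`(-b k, b k, b k, -b k)`. With `θ = π / (4n)` the four angles of block `k` are `x - 3θ, x - θ, x + θ,
x + 3θ`, where `x = (2k+1)π/n` is the angle of `b k`, and this signed sum of sines equals
`sin x · 4 sin θ sin 2θ`. So the lifted sum is the original one scaled by `4 sin θ sin 2θ ≥ 0`, and
taking the infimum over `b` gives the bound.
-/

theorem Finset.sum_range_mul_eq_sum_sum {M : Type*} [AddCommMonoid M] (f : ℕ → M) (q m : ℕ) :
    ∑ j ∈ range (q * m), f j = ∑ k ∈ range m, ∑ i ∈ range q, f (q * k + i) := by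
  induction m with
  | zero => simp
  | succ m ih => rw [Nat.mul_succ, sum_range_add, ih, sum_range_succ]

theorem Real.le_csInf_mul {s : Set ℝ} (hs : s.Nonempty) {a y : ℝ} (ha : 0 ≤ a)
    (h : ∀ x ∈ s, y ≤ x * a) : y ≤ sInf s * a := by
  obtain rfl | ha := ha.eq_or_lt
  · simpa using h _ hs.some_mem
  · rw [← div_le_iff₀ ha]
    exact le_csInf hs fun x hx => (div_le_iff₀ ha).2 (h x hx)

theorem Real.sin_pi_div_natCast_nonneg (k : ℕ) : 0 ≤ sin (π / k) := by
  obtain rfl | hk := k.eq_zero_or_pos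
  · simp
  · exact sin_nonneg_of_nonneg_of_le_pi (by positivity)
      (div_le_self pi_pos.le (by exact_mod_cast hk))

theorem Real.sin_add_add_sin_sub_sub_sin_add_three_mul_sub_sin_sub_three_mul (x t : ℝ) :
    sin (x + t) + sin (x - t) - sin (x + 3 * t) - sin (x - 3 * t)
      = sin x * (4 * sin t * sin (2 * t)) := by
  simp only [sin_add, sin_sub, sin_three_mul, cos_three_mul, sin_two_mul]
  linear_combination (-8 * sin x * cos t) * sin_sq_add_cos_sq t

def quadrupleSigns (b : ℕ → ℝ) (j : ℕ) : ℝ :=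
  if j % 4 = 1 ∨ j % 4 = 2 then b (j / 4) else -b (j / 4)

theorem quadrupleSigns_eq_one_or_neg_one {b : ℕ → ℝ} (hb : ∀ k, b k = 1 ∨ b k = -1) (j : ℕ) :
    quadrupleSigns b j = 1 ∨ quadrupleSigns b j = -1 := by
  unfold quadrupleSigns
  split
  · exact hb _
  · rcases hb (j / 4) with h | h <;> simp [h]

theorem quadrupleSigns_four_mul_add (b : ℕ → ℝ) (k : ℕ) :
    quadrupleSigns b (4 * k) = -b k ∧ quadrupleSigns b (4 * k + 1) = b k ∧
      quadrupleSigns b (4 * k + 2) = b k ∧ quadrupleSigns b (4 * k + 3) = -b k := by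
  simp [quadrupleSigns, Nat.mul_add_div]

theorem sum_range_four_mul_quadrupleSigns_mul_sin (b : ℕ → ℝ) (m : ℕ) (θ : ℝ) :
    ∑ j ∈ range (4 * m), quadrupleSigns b j * sin ((2 * j + 1) * θ)
      = (∑ k ∈ range m, b k * sin ((2 * k + 1) * (4 * θ))) * (4 * sin θ * sin (2 * θ)) := by
  rw [sum_range_mul_eq_sum_sum, sum_mul]
  refine sum_congr rfl fun k _ => ?_
  obtain ⟨s₀, s₁, s₂, s₃⟩ := quadrupleSigns_four_mul_add b k
  set x : ℝ := (2 * k + 1) * (4 * θ)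
  have a₀ : (2 * ((4 * k : ℕ) : ℝ) + 1) * θ = x - 3 * θ := by push_cast; ring
  have a₁ : (2 * ((4 * k + 1 : ℕ) : ℝ) + 1) * θ = x - θ := by push_cast; ring
  have a₂ : (2 * ((4 * k + 2 : ℕ) : ℝ) + 1) * θ = x + θ := by push_cast; ring
  have a₃ : (2 * ((4 * k + 3 : ℕ) : ℝ) + 1) * θ = x + 3 * θ := by push_cast; ring
  simp only [sum_range_succ, sum_range_zero, zero_add, add_zero, s₀, s₁, s₂, s₃, a₀, a₁, a₂, a₃]
  linear_combination b k * sin_add_add_sin_sub_sub_sin_add_three_mul_sub_sin_sub_three_mul x θ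

theorem sum_quadrupleSigns_mul_sin_div (b : ℕ → ℝ) {n : ℕ} (h4 : 4 ∣ n) :
    ∑ j ∈ range (4 * n / 4), quadrupleSigns b j * sin ((2 * j + 1) * π / (4 * n : ℕ))
      = (∑ k ∈ range (n / 4), b k * sin ((2 * k + 1) * π / n))
        * (4 * sin (π / (4 * n)) * sin (π / (2 * n))) := by
  obtain ⟨m, rfl⟩ := h4
  set θ : ℝ := π / (16 * m)
  have h₁ (x : ℝ) : x * π / (4 * (4 * m) : ℕ) = x * θ := by push_cast; ring
  have h₂ (x : ℝ) : x * π / (4 * m : ℕ) = x * (4 * θ) := by push_cast; ring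
  have h₃ : π / (4 * (4 * m : ℕ)) = θ := by push_cast; ring
  have h₄ : π / (2 * (4 * m : ℕ)) = 2 * θ := by push_cast; ring
  simp only [h₁, h₂, h₃, h₄, Nat.mul_div_cancel_left _ four_pos]
  exact sum_range_four_mul_quadrupleSigns_mul_sin b m θ

theorem M_four_mul_le_general (n : ℕ) (h4 : 4 ∣ n) :
    M (4 * n) ≤ M n * (4 * Real.sin (Real.pi / (4 * n)) * Real.sin (Real.pi / (2 * n))) := by
  have hC : 0 ≤ 4 * sin (π / (4 * n)) * sin (π / (2 * n)) := by
    have h₁ := sin_pi_div_natCast_nonneg (4 * n)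
    have h₂ := sin_pi_div_natCast_nonneg (2 * n)
    push_cast at h₁ h₂
    positivity
  unfold M
  refine le_csInf_mul ?_ hC ?_
  · exact ⟨_, fun _ => 1, fun _ => Or.inl rfl, rfl⟩
  rintro _ ⟨b, hb, rfl⟩
  rw [← abs_of_nonneg hC, ← abs_mul, ← sum_quadrupleSigns_mul_sin_div b h4]
  exact csInf_le ⟨0, fun _ ⟨_, _, hx⟩ => hx ▸ abs_nonneg _⟩
    ⟨_, quadrupleSigns_eq_one_or_neg_one hb, rfl⟩

theorem M_four_mul_le (n : ℕ) (h4 : 4 ∣ n) (hn : 4 ≤ n) :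
    M (4 * n) ≤ M n * (4 * Real.sin (Real.pi / (4 * n)) * Real.sin (Real.pi / (2 * n))) :=
  M_four_mul_le_general n h4
end

section
/- For every integer s ≥ 2, M_{2^s} ≤ 2^{s-2} · ∏_{k=1}^{s} sin(π/2^k), where M_n = min over sign choices b_k ∈ {1,-1} of |∑_{k=0}^{n/4-1} b_k sin((2k+1)π/n)|. -/
open Real Finset

/-!
Grouping the terms of `∑_{k < 2n} ε_k sin((2k+1)θ)` in consecutive pairs with opposite signs,
`sin((2k+1)θ) - sin((2k+3)θ) = -2 sin θ cos((k+1)·2θ)` turns a sine sum of length `2n` at angle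
`θ` into `-2 sin θ` times a cosine sum of length `n` at angle `2θ`, and symmetrically for cosine
sums. Iterating from `θ = π/2^s` down to the angle `π/4`, where sine and cosine agree, produces
signs for which the sum is exactly `2^(s-2) ∏_{k=1}^{s} sin(π/2^k)`.
-/

lemma sum_range_two_mul {α : Type*} [AddCommMonoid α] (n : ℕ) (f : ℕ → α) :
    ∑ k ∈ range (2 * n), f k = ∑ j ∈ range n, (f (2 * j) + f (2 * j + 1)) := by
  induction n with
  | zero => simp
  | succ n ih =>
    rw [Nat.mul_succ, sum_range_succ, sum_range_succ, sum_range_succ, ih, add_assoc]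

lemma sin_sub_sub_sin_add (a θ : ℝ) : sin (a - θ) - sin (a + θ) = -2 * sin θ * cos a := by
  rw [sin_sub, sin_add]; ring

lemma cos_sub_sub_cos_add (a θ : ℝ) : cos (a - θ) - cos (a + θ) = 2 * sin θ * sin a := by
  rw [cos_sub, cos_add]; ring

def IsSignSeq (b : ℕ → ℝ) : Prop := ∀ k, b k = 1 ∨ b k = -1

noncomputable def sinSum (b : ℕ → ℝ) (n : ℕ) (θ : ℝ) : ℝ := ∑ k ∈ range n, b k * sin ((2 * k + 1) * θ)

noncomputable def cosSum (b : ℕ → ℝ) (n : ℕ) (θ : ℝ) : ℝ := ∑ k ∈ range n, b k * cos ((2 * k + 1) * θ)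

def alternate (c : ℕ → ℝ) (k : ℕ) : ℝ := (-1) ^ k * c (k / 2)

lemma IsSignSeq.alternate {c : ℕ → ℝ} (hc : IsSignSeq c) : IsSignSeq (alternate c) := by
  intro k
  rcases neg_one_pow_eq_or ℝ k with h | h <;> rcases hc (k / 2) with h' | h' <;>
    simp [_root_.alternate, h, h']

lemma alternate_two_mul (c : ℕ → ℝ) (j : ℕ) : alternate c (2 * j) = c j := by
  simp [alternate, pow_mul]

lemma alternate_two_mul_add_one (c : ℕ → ℝ) (j : ℕ) : alternate c (2 * j + 1) = -c j := by
  simp [alternate, pow_succ, pow_mul, Nat.mul_add_div]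

lemma odd_multiples_of_pair (j : ℕ) (θ : ℝ) :
    (2 * ((2 * j : ℕ) : ℝ) + 1) * θ = (2 * j + 1) * (2 * θ) - θ ∧
      (2 * ((2 * j + 1 : ℕ) : ℝ) + 1) * θ = (2 * j + 1) * (2 * θ) + θ := by
  push_cast; constructor <;> ring

lemma sinSum_alternate (c : ℕ → ℝ) (n : ℕ) (θ : ℝ) :
    sinSum (alternate c) (2 * n) θ = -2 * sin θ * cosSum c n (2 * θ) := by
  rw [sinSum, cosSum, sum_range_two_mul, mul_sum]
  refine sum_congr rfl fun j _ => ?_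
  obtain ⟨h₁, h₂⟩ := odd_multiples_of_pair j θ
  rw [alternate_two_mul, alternate_two_mul_add_one, h₁, h₂]
  linear_combination c j * sin_sub_sub_sin_add ((2 * j + 1) * (2 * θ)) θ

lemma cosSum_alternate (b : ℕ → ℝ) (n : ℕ) (θ : ℝ) :
    cosSum (alternate b) (2 * n) θ = 2 * sin θ * sinSum b n (2 * θ) := by
  rw [sinSum, cosSum, sum_range_two_mul, mul_sum]
  refine sum_congr rfl fun j _ => ?_
  obtain ⟨h₁, h₂⟩ := odd_multiples_of_pair j θ
  rw [alternate_two_mul, alternate_two_mul_add_one, h₁, h₂]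
  linear_combination b j * cos_sub_sub_cos_add ((2 * j + 1) * (2 * θ)) θ

theorem exists_abs_sinSum_eq_abs_cosSum_eq {φ : ℝ} (hφ : |sin φ| = |cos φ|) (m : ℕ) :
    ∃ b c, IsSignSeq b ∧ IsSignSeq c ∧
      |sinSum b (2 ^ m) (φ / 2 ^ m)| = 2 ^ m * |sin φ * ∏ i ∈ Icc 1 m, sin (φ / 2 ^ i)| ∧
      |cosSum c (2 ^ m) (φ / 2 ^ m)| = 2 ^ m * |sin φ * ∏ i ∈ Icc 1 m, sin (φ / 2 ^ i)| := by
  induction m with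
  | zero =>
    refine ⟨1, 1, fun _ => .inl rfl, fun _ => .inl rfl, ?_, ?_⟩ <;> simp [sinSum, cosSum, hφ]
  | succ m ih =>
    obtain ⟨b, c, hb, hc, hbs, hcs⟩ := ih
    have hθ : 2 * (φ / 2 ^ (m + 1)) = φ / 2 ^ m := by rw [pow_succ]; field_simp
    have hprod : |sin φ * ∏ i ∈ Icc 1 (m + 1), sin (φ / 2 ^ i)| =
        |sin φ * ∏ i ∈ Icc 1 m, sin (φ / 2 ^ i)| * |sin (φ / 2 ^ (m + 1))| := by
      rw [prod_Icc_succ_top (by omega), ← mul_assoc, abs_mul]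
    refine ⟨alternate c, alternate b, hc.alternate, hb.alternate, ?_, ?_⟩
    · rw [pow_succ', sinSum_alternate, hθ, abs_mul, abs_mul, hcs, hprod]
      simp only [abs_neg, abs_two]
      ring
    · rw [pow_succ', cosSum_alternate, hθ, abs_mul, abs_mul, hbs, hprod, abs_two]
      ring

lemma M_le_abs_sinSum (n : ℕ) {b : ℕ → ℝ} (hb : IsSignSeq b) :
    M n ≤ |sinSum b (n / 4) (π / n)| :=
  csInf_le ⟨0, fun _ ⟨_, _, hx⟩ => hx ▸ abs_nonneg _⟩ ⟨b, hb, by simp only [sinSum, mul_div_assoc]⟩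

lemma sin_pi_div_four_mul_prod (m : ℕ) :
    sin (π / 4) * ∏ i ∈ Icc 1 m, sin (π / 4 / 2 ^ i) = ∏ k ∈ Icc 1 (m + 2), sin (π / 2 ^ k) := by
  induction m with
  | zero => simp [show Icc 1 2 = {1, 2} from rfl, sin_pi_div_two]
  | succ m ih =>
    have hangle : π / 4 / 2 ^ (m + 1) = π / 2 ^ (m + 2 + 1) := by
      rw [div_div, show (4 : ℝ) = 2 ^ 2 by norm_num, ← pow_add, add_comm 2, add_assoc]
    rw [prod_Icc_succ_top (by omega), prod_Icc_succ_top (b := m + 2) (by omega), ← ih, hangle,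
      mul_assoc]

lemma prod_sin_pi_div_pow_nonneg (s : ℕ) : 0 ≤ ∏ k ∈ Icc 1 s, sin (π / 2 ^ k) :=
  prod_nonneg fun k _ => sin_nonneg_of_nonneg_of_le_pi (by positivity)
    (div_le_self pi_pos.le (one_le_pow₀ one_le_two))

theorem M_pow_two_le (s : ℕ) (hs : 2 ≤ s) :
    M (2 ^ s) ≤ 2 ^ (s - 2) * ∏ k ∈ Finset.Icc 1 s, Real.sin (Real.pi / 2 ^ k) := by
  obtain ⟨m, rfl⟩ := Nat.exists_eq_add_of_le' hs
  have hφ : |sin (π / 4)| = |cos (π / 4)| := by rw [sin_pi_div_four, cos_pi_div_four]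
  obtain ⟨b, -, hb, -, hbs, -⟩ := exists_abs_sinSum_eq_abs_cosSum_eq hφ m
  have hlen : 2 ^ (m + 2) / 4 = 2 ^ m := by rw [pow_add]; simp
  have hθ : π / ((2 ^ (m + 2) : ℕ) : ℝ) = π / 4 / 2 ^ m := by push_cast; rw [div_div, pow_add]; ring
  calc M (2 ^ (m + 2)) ≤ |sinSum b (2 ^ m) (π / 4 / 2 ^ m)| := hlen ▸ hθ ▸ M_le_abs_sinSum _ hb
    _ = 2 ^ (m + 2 - 2) * ∏ k ∈ Icc 1 (m + 2), sin (π / 2 ^ k) := by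
      rw [hbs, sin_pi_div_four_mul_prod, abs_of_nonneg (prod_sin_pi_div_pow_nonneg _),
        Nat.add_sub_cancel]
end

section
/- For n = 2^s with s ≥ 4, define σ_n = 2 sin(π/n)·M_n with M_n as above, and δ_n = arccos((σ_n/√(1+σ_n²)) cos(π/n)) − arccos(σ_n/√(1+σ_n²)). Then 2n sin(π/(2n)) − 2n sin(π/(2n)) cos(δ_n/2) = O(π^{2 log₂ n}/n^{log₂ n + 5}) as n → ∞ along powers of 2. -/
open Real Finset

noncomputable def σpoly (n : ℕ) : ℝ := 2 * Real.sin (Real.pi / n) * M n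

noncomputable def δpoly (n : ℕ) : ℝ :=
  Real.arccos (σpoly n / Real.sqrt (1 + σpoly n ^ 2) * Real.cos (Real.pi / n)) -
    Real.arccos (σpoly n / Real.sqrt (1 + σpoly n ^ 2))

/-!
Pairing `k` with `k + 2 ^ t` and using `sin (x + d) - sin x = 2 sin (d / 2) cos (x + d / 2)`
turns a signed sum of the `2 ^ (t + 1)` sines `sin (α + k h)` into `2 sin (2 ^ t h / 2)` times
a signed sum of `2 ^ t` such sines; iterating gives, with `θ = π / n` and `n = 2 ^ (t + 2)`,
`M n ≤ ∏_{i<t} 2 sin (2 ^ i θ) ≤ ∏_{i<t} 2 ^ (i + 1) θ`. Hence `σ ≤ 2 θ M ≤ 1 / 2`, and since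
`arcsin` is `2`-Lipschitz on `[-1/2, 1/2]`, `δ ≤ σ θ ^ 2 ≤ 2 θ ^ 3 M`. Finally
`2 n sin (π / 2n) ≤ π` and `1 - cos (δ / 2) ≤ δ ^ 2 / 8` bound the deficiency by
`π θ ^ 6 M ^ 2 / 2 ≤ 2 π ^ 3 · π ^ (2 s) / n ^ (s + 5)`.
-/

lemma arcsin_sub_arcsin_le {a b : ℝ} (ha : -(1 / 2) ≤ a) (hab : a ≤ b) (hb : b ≤ 1 / 2) :
    arcsin b - arcsin a ≤ 2 * (b - a) := by
  refine (convex_Icc (-(1 / 2) : ℝ) (1 / 2)).image_sub_le_mul_sub_of_deriv_le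
    continuous_arcsin.continuousOn (fun x hx ↦ ?_) (fun x hx ↦ ?_) a ⟨ha, hab.trans hb⟩ b
    ⟨ha.trans hab, hb⟩ hab
  all_goals
    rw [interior_Icc] at hx
    obtain ⟨hx₁, hx₂⟩ := hx
  · exact (differentiableAt_arcsin.2 ⟨by linarith, by linarith⟩).differentiableWithinAt
  · have : 1 / 2 ≤ √(1 - x ^ 2) := Real.le_sqrt_of_sq_le (by nlinarith)
    rw [deriv_arcsin, div_le_iff₀ (by linarith)]
    linarith

lemma arccos_sub_arccos_le {a b : ℝ} (ha : -(1 / 2) ≤ a) (hab : a ≤ b) (hb : b ≤ 1 / 2) :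
    arccos a - arccos b ≤ 2 * (b - a) := by
  simpa [arccos_eq_pi_div_two_sub_arcsin] using arcsin_sub_arcsin_le ha hab hb

lemma arccos_mul_cos_sub_arccos_le {c : ℝ} (hc₀ : 0 ≤ c) (hc : c ≤ 1 / 2) (x : ℝ) :
    arccos (c * cos x) - arccos c ≤ c * x ^ 2 := by
  have hcos : c * cos x ≤ c := mul_le_of_le_one_right hc₀ (cos_le_one x)
  have : -(1 / 2) ≤ c * cos x := by nlinarith [neg_one_le_cos x]
  calc arccos (c * cos x) - arccos c ≤ 2 * (c - c * cos x) := arccos_sub_arccos_le this hcos hc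
    _ = 2 * c * (1 - cos x) := by ring
    _ ≤ 2 * c * (x ^ 2 / 2) := by gcongr; linarith [one_sub_sq_div_two_le_cos (x := x)]
    _ = c * x ^ 2 := by ring

lemma sin_add_sub_sin (x d : ℝ) :
    sin (x + d) - sin x = 2 * sin (d / 2) * sin (x + d / 2 + π / 2) := by
  rw [sin_sub_sin, sin_add_pi_div_two]
  ring_nf

lemma exists_signs_abs_sum_sin_le (t : ℕ) (α h : ℝ) :
    ∃ b : ℕ → ℝ, (∀ k, b k = 1 ∨ b k = -1) ∧
      |∑ k ∈ range (2 ^ t), b k * sin (α + k * h)| ≤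
        ∏ i ∈ range t, |2 * sin (2 ^ i * h / 2)| := by
  induction t generalizing α with
  | zero => exact ⟨fun _ ↦ 1, fun _ ↦ Or.inl rfl, by simpa using abs_sin_le_one α⟩
  | succ t ih =>
    obtain ⟨c, hc, hsum⟩ := ih (α + 2 ^ t * h / 2 + π / 2)
    refine ⟨fun k ↦ if k < 2 ^ t then -c k else c (k - 2 ^ t), fun k ↦ ?_, ?_⟩
    · dsimp only
      split_ifs
      · rcases hc k with hk | hk <;> simp [hk]
      · exact hc _
    have hpair : ∀ k ∈ range (2 ^ t),
        (if k < 2 ^ t then -c k else c (k - 2 ^ t)) * sin (α + k * h) +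
          (if 2 ^ t + k < 2 ^ t then -c (2 ^ t + k) else c (2 ^ t + k - 2 ^ t)) *
            sin (α + ((2 ^ t + k : ℕ) : ℝ) * h) =
          2 * sin (2 ^ t * h / 2) * (c k * sin (α + 2 ^ t * h / 2 + π / 2 + k * h)) := by
      intro k hk
      rw [if_pos (mem_range.1 hk), if_neg (by omega), Nat.add_sub_cancel_left]
      have := sin_add_sub_sin (α + k * h) (2 ^ t * h)
      rw [show α + k * h + 2 ^ t * h = α + (2 ^ t + k) * h by ring,
        show α + k * h + 2 ^ t * h / 2 + π / 2 = α + 2 ^ t * h / 2 + π / 2 + k * h by ring] at this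
      push_cast
      linear_combination c k * this
    rw [pow_succ, mul_two, sum_range_add, ← sum_add_distrib, sum_congr rfl hpair, ← mul_sum,
      abs_mul, prod_range_succ, mul_comm]
    gcongr

lemma M_nonneg (n : ℕ) : 0 ≤ M n :=
  Real.sInf_nonneg (by rintro x ⟨b, -, rfl⟩; exact abs_nonneg _)

lemma M_le_abs_sum (n : ℕ) {b : ℕ → ℝ} (hb : ∀ k, b k = 1 ∨ b k = -1) :
    M n ≤ |∑ k ∈ range (n / 4), b k * sin ((2 * (k : ℝ) + 1) * π / n)| :=
  csInf_le ⟨0, by rintro x ⟨b, -, rfl⟩; exact abs_nonneg _⟩ ⟨b, hb, rfl⟩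

lemma M_two_pow_le_prod (t : ℕ) :
    M (2 ^ (t + 2)) ≤ ∏ i ∈ range t, 2 ^ (i + 1) * (π / 2 ^ (t + 2)) := by
  set θ : ℝ := π / 2 ^ (t + 2) with hθ
  obtain ⟨b, hb, hsum⟩ := exists_signs_abs_sum_sin_le t θ (2 * θ)
  calc M (2 ^ (t + 2)) ≤ |∑ k ∈ range (2 ^ t), b k * sin (θ + k * (2 * θ))| := by
        convert M_le_abs_sum (2 ^ (t + 2)) hb using 4 with k
        · rw [pow_add]; simp
        · rw [hθ]; push_cast; congr 1; ring
    _ ≤ ∏ i ∈ range t, |2 * sin (2 ^ i * (2 * θ) / 2)| := hsum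
    _ ≤ ∏ i ∈ range t, 2 ^ (i + 1) * θ := by
        refine prod_le_prod (fun _ _ ↦ abs_nonneg _) fun i _ ↦ ?_
        calc |2 * sin (2 ^ i * (2 * θ) / 2)| = 2 * |sin (2 ^ i * θ)| := by
              rw [abs_mul, abs_two, mul_div_assoc, mul_div_cancel_left₀ _ two_ne_zero]
          _ ≤ 2 * |2 ^ i * θ| := mul_le_mul_of_nonneg_left abs_sin_le_abs zero_le_two
          _ = 2 ^ (i + 1) * θ := by rw [abs_of_nonneg (by positivity)]; ring

lemma M_two_pow_le_one (t : ℕ) : M (2 ^ (t + 2)) ≤ 1 := by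
  refine (M_two_pow_le_prod t).trans (prod_le_one (fun _ _ ↦ by positivity) fun i hi ↦ ?_)
  have hi : (2 : ℝ) ^ (i + 1) ≤ 2 ^ t := pow_le_pow_right₀ one_le_two (mem_range.1 hi)
  rw [mul_div_assoc', div_le_one (by positivity)]
  calc 2 ^ (i + 1) * π ≤ 2 ^ t * 4 := mul_le_mul hi pi_lt_four.le pi_pos.le (by positivity)
    _ = 2 ^ (t + 2) := by ring

lemma prod_range_two_pow_succ_mul_sq {R : Type*} [CommSemiring R] (t : ℕ) (x : R) :
    (∏ i ∈ range t, 2 ^ (i + 1) * x) ^ 2 = 2 ^ (t * t + t) * x ^ (2 * t) := by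
  induction t with
  | zero => simp
  | succ t ih => rw [prod_range_succ, mul_pow, ih]; ring

-- Stated for a general base: for `a = 2`, `ring` cannot match `4 ^ t` with `2 ^ (2 * t)`.
lemma pi_mul_div_pow_mul_eq {a : ℝ} (ha : a ≠ 0) (t : ℕ) :
    π * (π / a ^ (t + 2)) ^ 6 * (a ^ (t * t + t) * (π / a ^ (t + 2)) ^ (2 * t)) / 2 =
      a ^ 2 / 2 * π ^ 3 * (π ^ (2 * (t + 2)) / (a ^ (t + 2)) ^ (t + 2 + 5)) := by
  rw [div_pow, div_pow]
  field_simp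
  ring

lemma pi_mul_div_two_pow_mul_le (t : ℕ) :
    π * (π / 2 ^ (t + 2)) ^ 6 * (2 ^ (t * t + t) * (π / 2 ^ (t + 2)) ^ (2 * t)) / 2 ≤
      100 * π ^ (2 * (t + 2)) / (2 ^ (t + 2)) ^ (t + 2 + 5) := by
  rw [pi_mul_div_pow_mul_eq two_ne_zero, mul_div_assoc]
  gcongr
  have := pow_le_pow_left₀ pi_pos.le pi_lt_d2.le 3
  norm_num at this ⊢
  linarith

lemma two_mul_mul_sin_pi_div_le (n : ℕ) : 2 * n * sin (π / (2 * n)) ≤ π := by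
  rcases n.eq_zero_or_pos with rfl | hn
  · simp [pi_pos.le]
  calc 2 * n * sin (π / (2 * n)) ≤ 2 * n * (π / (2 * n)) := by gcongr; exact sin_le (by positivity)
    _ = π := by field_simp

lemma two_mul_mul_sin_sub_mul_cos_le (n : ℕ) (δ : ℝ) :
    2 * n * sin (π / (2 * n)) - 2 * n * sin (π / (2 * n)) * cos (δ / 2) ≤ π * δ ^ 2 / 8 := by
  have hcos : 1 - cos (δ / 2) ≤ (δ / 2) ^ 2 / 2 := by
    linarith [one_sub_sq_div_two_le_cos (x := δ / 2)]
  calc _ = 2 * n * sin (π / (2 * n)) * (1 - cos (δ / 2)) := by ring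
    _ ≤ π * ((δ / 2) ^ 2 / 2) :=
        mul_le_mul (two_mul_mul_sin_pi_div_le n) hcos (by linarith [cos_le_one (δ / 2)]) pi_pos.le
    _ = π * δ ^ 2 / 8 := by ring

lemma σpoly_nonneg (n : ℕ) : 0 ≤ σpoly n := by
  rcases n.eq_zero_or_pos with rfl | hn
  · simp [σpoly]
  have : π / n ≤ π := div_le_self pi_pos.le (by exact_mod_cast hn)
  exact mul_nonneg (mul_nonneg zero_le_two (sin_nonneg_of_nonneg_of_le_pi (by positivity) this))
    (M_nonneg n)

lemma σpoly_le (n : ℕ) : σpoly n ≤ 2 * (π / n) * M n := by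
  unfold σpoly
  gcongr
  exacts [M_nonneg n, sin_le (by positivity)]

lemma div_sqrt_one_add_sq_nonneg {x : ℝ} (hx : 0 ≤ x) : 0 ≤ x / √(1 + x ^ 2) :=
  div_nonneg hx (sqrt_nonneg _)

lemma div_sqrt_one_add_sq_le {x : ℝ} (hx : 0 ≤ x) : x / √(1 + x ^ 2) ≤ x :=
  div_le_self hx (one_le_sqrt.2 (by nlinarith))

lemma δpoly_nonneg (n : ℕ) : 0 ≤ δpoly n :=
  sub_nonneg.2 <| arccos_le_arccos <|
    mul_le_of_le_one_right (div_sqrt_one_add_sq_nonneg (σpoly_nonneg n)) (cos_le_one _)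

lemma δpoly_le (n : ℕ) (hσ : σpoly n ≤ 1 / 2) : δpoly n ≤ σpoly n * (π / n) ^ 2 := by
  have hc₀ := div_sqrt_one_add_sq_nonneg (σpoly_nonneg n)
  have hc := div_sqrt_one_add_sq_le (σpoly_nonneg n)
  calc δpoly n ≤ σpoly n / √(1 + σpoly n ^ 2) * (π / n) ^ 2 :=
        arccos_mul_cos_sub_arccos_le hc₀ (hc.trans hσ) _
    _ ≤ σpoly n * (π / n) ^ 2 := by gcongr

lemma natCast_two_pow (s : ℕ) : ((2 ^ s : ℕ) : ℝ) = 2 ^ s := by norm_num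

lemma σpoly_two_pow_le (s : ℕ) : σpoly (2 ^ s) ≤ 2 * (π / 2 ^ s) * M (2 ^ s) := by
  simpa only [natCast_two_pow] using σpoly_le (2 ^ s)

lemma σpoly_two_pow_le_half {t : ℕ} (ht : 2 ≤ t) : σpoly (2 ^ (t + 2)) ≤ 1 / 2 := by
  have h16 : (2 : ℝ) ^ 4 ≤ 2 ^ (t + 2) := pow_le_pow_right₀ one_le_two (by omega)
  calc σpoly (2 ^ (t + 2)) ≤ 2 * (π / 2 ^ (t + 2)) * 1 :=
        (σpoly_two_pow_le _).trans (by gcongr; exact M_two_pow_le_one t)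
    _ ≤ 2 * (π / 2 ^ 4) * 1 := by gcongr
    _ ≤ 1 / 2 := by linarith [pi_lt_four]

lemma δpoly_two_pow_le {t : ℕ} (ht : 2 ≤ t) :
    δpoly (2 ^ (t + 2)) ≤ 2 * (π / 2 ^ (t + 2)) ^ 3 * M (2 ^ (t + 2)) :=
  calc δpoly (2 ^ (t + 2)) ≤ σpoly (2 ^ (t + 2)) * (π / 2 ^ (t + 2)) ^ 2 := by
        simpa only [natCast_two_pow] using δpoly_le _ (σpoly_two_pow_le_half ht)
    _ ≤ 2 * (π / 2 ^ (t + 2)) * M (2 ^ (t + 2)) * (π / 2 ^ (t + 2)) ^ 2 := by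
        gcongr; exact σpoly_two_pow_le _
    _ = 2 * (π / 2 ^ (t + 2)) ^ 3 * M (2 ^ (t + 2)) := by ring

lemma logb_two_natCast_two_pow (s : ℕ) : logb 2 ((2 ^ s : ℕ) : ℝ) = s := by
  rw [natCast_two_pow, logb_pow, logb_self_eq_one one_lt_two, mul_one]

theorem perimeter_deficiency_bound :
    ∃ C > 0, ∀ s : ℕ, 4 ≤ s → ∀ n : ℕ, n = 2 ^ s →
      2 * n * Real.sin (Real.pi / (2 * n)) -
          2 * n * Real.sin (Real.pi / (2 * n)) * Real.cos (δpoly n / 2) ≤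
        C * Real.pi ^ (2 * Real.logb 2 n) / (n : ℝ) ^ (Real.logb 2 n + 5) := by
  refine ⟨100, by norm_num, ?_⟩
  rintro s hs n rfl
  obtain ⟨t, rfl⟩ : ∃ t, s = t + 2 := ⟨s - 2, by omega⟩
  rw [logb_two_natCast_two_pow, show (2 : ℝ) * ((t + 2 : ℕ) : ℝ) = ((2 * (t + 2) : ℕ) : ℝ) by
    push_cast; ring, ← Nat.cast_ofNat (R := ℝ) (n := 5), ← Nat.cast_add, rpow_natCast,
    rpow_natCast]
  set θ : ℝ := π / 2 ^ (t + 2)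
  set m := M (2 ^ (t + 2))
  calc _ ≤ π * δpoly (2 ^ (t + 2)) ^ 2 / 8 := two_mul_mul_sin_sub_mul_cos_le _ _
    _ ≤ π * (2 * θ ^ 3 * m) ^ 2 / 8 := by
        gcongr
        exacts [δpoly_nonneg _, δpoly_two_pow_le (by omega)]
    _ = π * θ ^ 6 * m ^ 2 / 2 := by ring
    _ ≤ π * θ ^ 6 * (2 ^ (t * t + t) * θ ^ (2 * t)) / 2 := by
        rw [← prod_range_two_pow_succ_mul_sq]
        gcongr
        exacts [M_nonneg _, M_two_pow_le_prod t]
    _ ≤ _ := by rw [natCast_two_pow]; exact pi_mul_div_two_pow_mul_le t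
end
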